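/- Under the hypotheses of the Weak Rescaled Pure Greedy Algorithm WRPGA({t_k}, D) in a real Banach space X with modulus of smoothness ρ(u) ≤ γ u^q (1 < q ≤ 2, γ > 0), with weakness sequence t_k ∈ (0, 1], for f ∈ A_1(D, M) the iterates satisfy the explicit bound: for every m ≥ 2, ‖f − f_m‖ ≤ M · ( t_1^{q/(q−1)} + ((q−1)/q) (2γq)^{1/(1−q)} ∑_{k=2}^m t_k^{q/(q−1)} )^{1/q − 1}, where (f_m) is defined by f_0 = 0 and, for each m ≥ 1, if f_{m−1} = f then f_m := f, and otherwise φ_m ∈ D satisfies |F_{f−f_{m−1}}(φ_m)| ≥ t_m · sup_{φ∈D} |F_{f−f_{m−1}}(φ)| for a norming functional F_{f−f_{m−1}} of f − f_{m−1}, λ_m := sign(F_{f−f_{m−1}}(φ_m)) · ‖f − f_{m−1}‖ · (2γq)^{1/(1−q)} · |F_{f−f_{m−1}}(φ_m)|^{1/(q−1)}, ĥ_m := f_{m−1} + λ_m φ_m, and f_m := s_m ĥ_m with s_m ∈ ℝ minimizing ‖f − s ĥ_m‖ over s ∈ ℝ. -/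

import Mathlib

open scoped BigOperators

/-- A dictionary in a normed space: a set of norm-one elements with dense linear span. -/
def IsDictionary (X : Type*) [NormedAddCommGroup X] [NormedSpace ℝ X] (D : Set X) : Prop :=
  (∀ φ ∈ D, ‖φ‖ = 1) ∧ Dense (Submodule.span ℝ D : Set X)

/-- Finite linear combinations of dictionary elements with coefficients of total
absolute sum at most `M`. -/
def A1Pre (X : Type*) [NormedAddCommGroup X] [NormedSpace ℝ X] (D : Set X) (M : ℝ) : Set X :=
  {g | ∃ (n : ℕ) (c : Fin n → ℝ) (φ : Fin n → X),
    (∀ i, φ i ∈ D) ∧ (∑ i, |c i|) ≤ M ∧ g = ∑ i, c i • φ i}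

/-- The class `A₁(D, M)`: the closure of `A1Pre`. -/
def A1 (X : Type*) [NormedAddCommGroup X] [NormedSpace ℝ X] (D : Set X) (M : ℝ) : Set X :=
  closure (A1Pre X D M)

/-- The modulus of smoothness of a real normed space `X`:
`ρ(u) = sup{(‖f + u g‖ + ‖f − u g‖)/2 − 1 : ‖f‖ = ‖g‖ = 1}`. -/
noncomputable def modulusOfSmoothness (X : Type*) [NormedAddCommGroup X] [NormedSpace ℝ X]
    (u : ℝ) : ℝ :=
  sSup {x : ℝ | ∃ f g : X, ‖f‖ = 1 ∧ ‖g‖ = 1 ∧ x = (‖f + u • g‖ + ‖f - u • g‖) / 2 - 1}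


/-!
Write `r = f - g` for the residual before a step and `F` for a norming functional of `r`.
If `g` is the best multiple of the previous `ĥ`, then `r` is Birkhoff-orthogonal to `ĥ`, and
since the norm is smooth (`ρ(u) ≤ γ u^q` with `q > 1`) this forces `F g = 0`. Hence
`‖r‖ = F f ≤ M sup_D |F|`, so the weak greedy choice gives `|F φ| ≥ t ‖r‖ / M`. Smoothness
also gives `‖r - λφ‖ ≤ ‖r‖ - λ F φ + 2γ ‖r‖ (|λ| / ‖r‖)^q`, and the prescribed `λ` minimizes
the right-hand side. With `p = q / (q - 1)` this yields the recursion
`a_{k+1} ≤ a_k (1 - c (t_{k+1} a_k / M)^p)` for `a_k = ‖f - f_k‖`, which integrates to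
`a_m ≤ M (t_1^p + c ∑_{k=2}^m t_k^p)^{-1/p}`.
-/

open Filter Topology

theorem Real.sign_mul_self (x : ℝ) : Real.sign x * x = |x| := by
  rcases lt_trichotomy x 0 with h | rfl | h
  · simp [Real.sign_of_neg h, abs_of_neg h]
  · simp
  · simp [Real.sign_of_pos h, abs_of_pos h]

theorem Real.abs_sign_of_ne_zero {x : ℝ} (hx : x ≠ 0) : |Real.sign x| = 1 := by
  rcases Real.sign_apply_eq_of_ne_zero x hx with h | h <;> simp [h]

theorem nonpos_of_forall_mul_le_mul_rpow {a C q : ℝ} (hq : 1 < q)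
    (h : ∀ τ : ℝ, 0 < τ → τ * a ≤ C * τ ^ q) : a ≤ 0 := by
  have hpow : Tendsto (fun τ : ℝ => τ ^ (q - 1)) (𝓝 0) (𝓝 0) := by
    simpa [Real.zero_rpow (by linarith : q - 1 ≠ 0)] using
      (Real.continuousAt_rpow_const 0 (q - 1) (Or.inr (by linarith))).tendsto
  have hlim : Tendsto (fun τ : ℝ => C * τ ^ (q - 1)) (𝓝[>] 0) (𝓝 0) := by
    simpa using (hpow.const_mul C).mono_left nhdsWithin_le_nhds
  refine ge_of_tendsto hlim (eventually_nhdsWithin_of_forall fun τ (hτ : 0 < τ) => ?_)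
  rw [Real.rpow_sub_one hτ.ne', ← mul_div_assoc, le_div_iff₀' hτ]
  exact h τ hτ

/-- The step size `u = |λ| / ‖r‖` of WRPGA when `|F φ| = B`. -/
noncomputable def stepCoeff (γ q B : ℝ) : ℝ :=
  (2 * γ * q) ^ ((1 : ℝ) / (1 - q)) * B ^ ((1 : ℝ) / (q - 1))

/-- `stepCoeff γ q B` is the maximizer of `u ↦ u B - 2γ u^q` on `u ≥ 0`; this is the maximum. -/
theorem stepCoeff_mul_sub_eq {γ q B : ℝ} (hγ : 0 < γ) (hq : 1 < q) (hB : 0 ≤ B) :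
    stepCoeff γ q B * B - 2 * γ * stepCoeff γ q B ^ q =
      (q - 1) / q * (2 * γ * q) ^ ((1 : ℝ) / (1 - q)) * B ^ (q / (q - 1)) := by
  have h2γq : 0 < 2 * γ * q := by positivity
  have hq₁ : q - 1 ≠ 0 := by linarith
  have hq₂ : 1 - q ≠ 0 := by linarith
  set A := (2 * γ * q) ^ ((1 : ℝ) / (1 - q))
  have hA : A ^ q = A / (2 * γ * q) := by
    rw [← Real.rpow_sub_one h2γq.ne', ← Real.rpow_mul h2γq.le]
    congr 1
    field_simp
    ring
  have hBp : B ^ (q / (q - 1)) = B ^ ((1 : ℝ) / (q - 1)) * B := by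
    rw [← Real.rpow_add_one' hB (by rw [div_add_one hq₁]; positivity)]
    congr 1
    field_simp
    ring
  have hBq : (B ^ ((1 : ℝ) / (q - 1))) ^ q = B ^ (q / (q - 1)) := by
    rw [← Real.rpow_mul hB]
    congr 1
    field_simp
  rw [show stepCoeff γ q B = A * B ^ ((1 : ℝ) / (q - 1)) from rfl,
    Real.mul_rpow (by positivity) (by positivity), hA, hBq, hBp]
  field_simp

section Smoothness

variable {X : Type*} [NormedAddCommGroup X] [NormedSpace ℝ X]

theorem le_modulusOfSmoothness {f g : X} (hf : ‖f‖ = 1) (hg : ‖g‖ = 1) (u : ℝ) :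
    (‖f + u • g‖ + ‖f - u • g‖) / 2 - 1 ≤ modulusOfSmoothness X u := by
  refine le_csSup ⟨|u|, ?_⟩ ⟨f, g, hf, hg, rfl⟩
  rintro _ ⟨f', g', hf', hg', rfl⟩
  have h₁ := norm_add_le f' (u • g')
  have h₂ := norm_sub_le f' (u • g')
  rw [norm_smul, hf', hg', Real.norm_eq_abs, mul_one] at h₁ h₂
  linarith

theorem norm_add_add_norm_sub_le {x y : X} (hx : x ≠ 0) (hy : y ≠ 0) :
    ‖x + y‖ + ‖x - y‖ ≤ 2 * ‖x‖ * (1 + modulusOfSmoothness X (‖y‖ / ‖x‖)) := by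
  have hxn : 0 < ‖x‖ := norm_pos_iff.mpr hx
  have hscale : (‖y‖ / ‖x‖) • (‖y‖⁻¹ • y) = ‖x‖⁻¹ • y := by
    rw [smul_smul]
    field_simp [norm_ne_zero_iff.mpr hy]
  have hρ := le_modulusOfSmoothness (norm_smul_inv_norm (𝕜 := ℝ) hx)
    (norm_smul_inv_norm (𝕜 := ℝ) hy) (‖y‖ / ‖x‖)
  simp only [RCLike.ofReal_real_eq_id, id_eq] at hρ
  rw [hscale, ← smul_add, ← smul_sub, norm_smul, norm_smul, norm_inv, norm_norm] at hρ
  calc ‖x + y‖ + ‖x - y‖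
      = 2 * ‖x‖ * (1 + ((‖x‖⁻¹ * ‖x + y‖ + ‖x‖⁻¹ * ‖x - y‖) / 2 - 1)) := by
        field_simp
        ring
    _ ≤ 2 * ‖x‖ * (1 + modulusOfSmoothness X (‖y‖ / ‖x‖)) := by gcongr

variable {γ q : ℝ}

theorem norm_sub_le_of_modulusOfSmoothness_le (hq : 0 < q)
    (hρ : ∀ u : ℝ, 0 < u → modulusOfSmoothness X u ≤ γ * u ^ q)
    {F : X →L[ℝ] ℝ} (hF : ‖F‖ ≤ 1) {x : X} (hx : x ≠ 0) (hFx : F x = ‖x‖) (y : X) :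
    ‖x - y‖ ≤ ‖x‖ - F y + 2 * γ * ‖x‖ * (‖y‖ / ‖x‖) ^ q := by
  rcases eq_or_ne y 0 with rfl | hy
  · simp [Real.zero_rpow hq.ne']
  have hxn : 0 < ‖x‖ := norm_pos_iff.mpr hx
  have hsmooth := norm_add_add_norm_sub_le hx hy
  have hρ' := mul_le_mul_of_nonneg_left (hρ _ (div_pos (norm_pos_iff.mpr hy) hxn))
    (by positivity : 0 ≤ 2 * ‖x‖)
  have hFxy : ‖x‖ + F y ≤ ‖x + y‖ := by
    rw [← hFx, ← map_add]
    exact (le_abs_self _).trans ((F.le_of_opNorm_le hF _).trans_eq (one_mul _))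
  linarith

theorem apply_nonpos_of_forall_norm_le_norm_sub_smul (hq : 1 < q)
    (hρ : ∀ u : ℝ, 0 < u → modulusOfSmoothness X u ≤ γ * u ^ q)
    {F : X →L[ℝ] ℝ} (hF : ‖F‖ ≤ 1) {x : X} (hx : x ≠ 0) (hFx : F x = ‖x‖) {h : X}
    (hmin : ∀ τ : ℝ, 0 < τ → ‖x‖ ≤ ‖x - τ • h‖) : F h ≤ 0 := by
  refine nonpos_of_forall_mul_le_mul_rpow hq (C := 2 * γ * ‖x‖ * (‖h‖ / ‖x‖) ^ q) fun τ hτ => ?_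
  have hdesc := (hmin τ hτ).trans
    (norm_sub_le_of_modulusOfSmoothness_le (by linarith) hρ hF hx hFx (τ • h))
  rw [map_smul, smul_eq_mul, norm_smul, Real.norm_of_nonneg hτ.le, mul_div_assoc,
    Real.mul_rpow hτ.le (by positivity)] at hdesc
  linarith

/-- A smooth norm is Gateaux differentiable, so Birkhoff orthogonality `x ⊥ h` forces `F h = 0`
for a norming functional `F` of `x`. -/
theorem apply_eq_zero_of_forall_norm_le_norm_sub_smul (hq : 1 < q)
    (hρ : ∀ u : ℝ, 0 < u → modulusOfSmoothness X u ≤ γ * u ^ q)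
    {F : X →L[ℝ] ℝ} (hF : ‖F‖ ≤ 1) {x : X} (hx : x ≠ 0) (hFx : F x = ‖x‖) {h : X}
    (hmin : ∀ τ : ℝ, ‖x‖ ≤ ‖x - τ • h‖) : F h = 0 := by
  have hpos := apply_nonpos_of_forall_norm_le_norm_sub_smul hq hρ hF hx hFx fun τ _ => hmin τ
  have hneg := apply_nonpos_of_forall_norm_le_norm_sub_smul hq hρ hF hx hFx (h := -h)
    fun τ _ => by simpa [smul_neg, neg_smul] using hmin (-τ)
  rw [map_neg] at hneg
  linarith

theorem norm_sub_sign_mul_stepCoeff_smul_le (hγ : 0 < γ) (hq : 1 < q)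
    (hρ : ∀ u : ℝ, 0 < u → modulusOfSmoothness X u ≤ γ * u ^ q)
    {F : X →L[ℝ] ℝ} (hF : ‖F‖ ≤ 1) {x : X} (hFx : F x = ‖x‖) {φ : X} (hφ : ‖φ‖ = 1) :
    ‖x - (Real.sign (F φ) * ‖x‖ * stepCoeff γ q |F φ|) • φ‖ ≤
      ‖x‖ * (1 - (q - 1) / q * (2 * γ * q) ^ ((1 : ℝ) / (1 - q)) * |F φ| ^ (q / (q - 1))) := by
  rcases eq_or_ne x 0 with rfl | hx
  · simp
  rcases eq_or_ne (F φ) 0 with hφ₀ | hφ₀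
  · simp [hφ₀, Real.zero_rpow (by positivity : q / (q - 1) ≠ 0)]
  set u := stepCoeff γ q |F φ|
  have hu : 0 ≤ u := by unfold u stepCoeff; positivity
  have hxn : 0 < ‖x‖ := norm_pos_iff.mpr hx
  have hnorm : ‖(Real.sign (F φ) * ‖x‖ * u) • φ‖ / ‖x‖ = u := by
    rw [norm_smul, hφ, mul_one, Real.norm_eq_abs, abs_mul, abs_mul,
      Real.abs_sign_of_ne_zero hφ₀, abs_norm, abs_of_nonneg hu]
    field_simp
  have happly : F ((Real.sign (F φ) * ‖x‖ * u) • φ) = ‖x‖ * (u * |F φ|) := by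
    rw [map_smul, smul_eq_mul, ← Real.sign_mul_self]
    ring
  have hdesc := norm_sub_le_of_modulusOfSmoothness_le (by linarith) hρ hF hx hFx
    ((Real.sign (F φ) * ‖x‖ * u) • φ)
  rw [hnorm, happly] at hdesc
  calc _ ≤ ‖x‖ - ‖x‖ * (u * |F φ|) + 2 * γ * ‖x‖ * u ^ q := hdesc
    _ = ‖x‖ * (1 - (u * |F φ| - 2 * γ * u ^ q)) := by ring
    _ = _ := by rw [stepCoeff_mul_sub_eq hγ hq (abs_nonneg _)]

end Smoothness

section A1

variable {X : Type*} [NormedAddCommGroup X] [NormedSpace ℝ X] {D : Set X} {M : ℝ}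

theorem norm_le_of_mem_A1 (hD : ∀ φ ∈ D, ‖φ‖ ≤ 1) {f : X} (hf : f ∈ A1 X D M) : ‖f‖ ≤ M := by
  refine closure_minimal (fun g hg => ?_) (isClosed_le continuous_norm continuous_const) hf
  obtain ⟨n, c, φ, hφ, hc, rfl⟩ := hg
  calc ‖∑ i, c i • φ i‖ ≤ ∑ i, ‖c i • φ i‖ := norm_sum_le _ _
    _ ≤ ∑ i, |c i| := Finset.sum_le_sum fun i _ => by
      rw [norm_smul, Real.norm_eq_abs]
      exact mul_le_of_le_one_right (abs_nonneg _) (hD _ (hφ i))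
    _ ≤ M := hc

theorem apply_le_mul_sSup_of_mem_A1 (hD : ∀ φ ∈ D, ‖φ‖ ≤ 1) (F : X →L[ℝ] ℝ) {f : X}
    (hf : f ∈ A1 X D M) : F f ≤ M * sSup {x : ℝ | ∃ ψ ∈ D, x = |F ψ|} := by
  set σ := sSup {x : ℝ | ∃ ψ ∈ D, x = |F ψ|}
  have hbdd : BddAbove {x : ℝ | ∃ ψ ∈ D, x = |F ψ|} := by
    refine ⟨‖F‖, ?_⟩
    rintro _ ⟨ψ, hψ, rfl⟩
    rw [← Real.norm_eq_abs]
    exact (F.le_opNorm ψ).trans (mul_le_of_le_one_right (norm_nonneg _) (hD ψ hψ))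
  have hle : ∀ ψ ∈ D, |F ψ| ≤ σ := fun ψ hψ => le_csSup hbdd ⟨ψ, hψ, rfl⟩
  have hσ : 0 ≤ σ := Real.sSup_nonneg (by rintro _ ⟨ψ, -, rfl⟩; exact abs_nonneg _)
  refine closure_minimal (fun g hg => ?_) (isClosed_le F.continuous continuous_const) hf
  obtain ⟨n, c, φ, hφ, hc, rfl⟩ := hg
  calc F (∑ i, c i • φ i) = ∑ i, c i * F (φ i) := by simp only [map_sum, map_smul, smul_eq_mul]
    _ ≤ ∑ i, |c i| * σ := Finset.sum_le_sum fun i _ => by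
      calc c i * F (φ i) ≤ |c i| * |F (φ i)| := (le_abs_self _).trans_eq (abs_mul _ _)
        _ ≤ |c i| * σ := mul_le_mul_of_nonneg_left (hle _ (hφ i)) (abs_nonneg _)
    _ = (∑ i, |c i|) * σ := (Finset.sum_mul _ _ _).symm
    _ ≤ M * σ := mul_le_mul_of_nonneg_right hc hσ

end A1

section WRPGA

variable {X : Type*} [NormedAddCommGroup X] [NormedSpace ℝ X]

/-- One WRPGA step `f_m = g ↦ f_{m+1} = g'` for `f`, taken when `g ≠ f`, with weakness
parameter `τ = t_{m+1}`. -/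
def IsWRPGAStep (γ q : ℝ) (D : Set X) (τ : ℝ) (f g g' : X) : Prop :=
  ∃ (F : X →L[ℝ] ℝ) (φ : X) (lam s : ℝ),
    ‖F‖ = 1 ∧ F (f - g) = ‖f - g‖ ∧
    φ ∈ D ∧ |F φ| ≥ τ * sSup {x : ℝ | ∃ ψ ∈ D, x = |F ψ|} ∧
    lam = Real.sign (F φ) * ‖f - g‖ * (2 * γ * q) ^ ((1 : ℝ) / (1 - q)) *
      |F φ| ^ ((1 : ℝ) / (q - 1)) ∧
    (∀ s' : ℝ, ‖f - s • (g + lam • φ)‖ ≤ ‖f - s' • (g + lam • φ)‖) ∧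
    g' = s • (g + lam • φ)

namespace IsWRPGAStep

variable {γ q τ M : ℝ} {D : Set X} {f g g' : X}

theorem norm_sub_le_norm (h : IsWRPGAStep γ q D τ f g g') : ‖f - g'‖ ≤ ‖f‖ := by
  obtain ⟨_, _, _, _, -, -, -, -, -, hmin, rfl⟩ := h
  simpa using hmin 0

theorem apply_eq_zero (hq : 1 < q)
    (hρ : ∀ u : ℝ, 0 < u → modulusOfSmoothness X u ≤ γ * u ^ q)
    (h : IsWRPGAStep γ q D τ f g g') (hne : g' ≠ f) {F : X →L[ℝ] ℝ} (hF : ‖F‖ ≤ 1)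
    (hFr : F (f - g') = ‖f - g'‖) : F g' = 0 := by
  obtain ⟨_, φ, lam, s, -, -, -, -, -, hmin, rfl⟩ := h
  have horth : F (g + lam • φ) = 0 := by
    refine apply_eq_zero_of_forall_norm_le_norm_sub_smul hq hρ hF (sub_ne_zero.mpr hne.symm)
      hFr fun τ => ?_
    rw [sub_sub, ← add_smul]
    exact hmin _
  rw [map_smul, horth, smul_zero]

theorem norm_sub_le (hγ : 0 < γ) (hq : 1 < q)
    (hρ : ∀ u : ℝ, 0 < u → modulusOfSmoothness X u ≤ γ * u ^ q)
    (hD : ∀ φ ∈ D, ‖φ‖ = 1) (hM : 0 < M) (hf : f ∈ A1 X D M) (hτ : 0 < τ)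
    (h : IsWRPGAStep γ q D τ f g g')
    (hg : ∀ F : X →L[ℝ] ℝ, ‖F‖ = 1 → F (f - g) = ‖f - g‖ → F g = 0) :
    ‖f - g'‖ ≤ ‖f - g‖ * (1 - (q - 1) / q * (2 * γ * q) ^ ((1 : ℝ) / (1 - q)) *
      (τ * ‖f - g‖ / M) ^ (q / (q - 1))) := by
  obtain ⟨F, φ, lam, s, hF, hFr, hφD, hφ, rfl, hmin, rfl⟩ := h
  have hFf : F f = ‖f - g‖ := by rw [← hFr, map_sub, hg F hF hFr, sub_zero]
  have hweak : τ * ‖f - g‖ / M ≤ |F φ| := by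
    have hA1 := apply_le_mul_sSup_of_mem_A1 (fun ψ hψ => (hD ψ hψ).le) F hf
    rw [div_le_iff₀ hM, ← hFf]
    linarith [mul_le_mul_of_nonneg_left hA1 hτ.le, mul_le_mul_of_nonneg_right hφ hM.le]
  calc _ ≤ ‖(f - g) - (Real.sign (F φ) * ‖f - g‖ * stepCoeff γ q |F φ|) • φ‖ := by
        simpa [stepCoeff, sub_sub, mul_assoc] using hmin 1
    _ ≤ _ := norm_sub_sign_mul_stepCoeff_smul_le hγ hq hρ hF.le hFr (hD φ hφD)
    _ ≤ _ := by gcongr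

end IsWRPGAStep

end WRPGA

theorem mul_one_sub_le_mul_rpow_add {a M S c T p : ℝ} (hM : 0 < M) (hS : 0 < S) (hc : 0 ≤ c)
    (hT : 0 ≤ T) (hp : 1 ≤ p) (ha : 0 ≤ a) (haS : a ≤ M * S ^ (-p⁻¹)) :
    a * (1 - c * (T * a / M) ^ p) ≤ M * (S + c * T ^ p) ^ (-p⁻¹) := by
  set S' := S + c * T ^ p
  have hSS' : S ≤ S' := le_add_of_nonneg_right (by positivity)
  have hS' : 0 < S' := hS.trans_le hSS'
  rcases le_or_gt a (M * S' ^ (-p⁻¹)) with hle | hlt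
  · have : 0 ≤ c * (T * a / M) ^ p := by positivity
    exact (mul_le_of_le_one_right ha (by linarith)).trans hle
  have hdecay : 1 - c * (T * a / M) ^ p ≤ S / S' := by
    have h₁ : T * S' ^ (-p⁻¹) ≤ T * a / M := by
      rw [le_div_iff₀ hM, mul_assoc, mul_comm _ M]
      exact mul_le_mul_of_nonneg_left hlt.le hT
    have h₂ : T ^ p / S' ≤ (T * a / M) ^ p := by
      calc T ^ p / S' = (T * S' ^ (-p⁻¹)) ^ p := by
            rw [Real.mul_rpow hT (by positivity), ← Real.rpow_mul hS'.le, neg_mul,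
              inv_mul_cancel₀ (by positivity), Real.rpow_neg_one, div_eq_mul_inv]
        _ ≤ (T * a / M) ^ p := Real.rpow_le_rpow (by positivity) h₁ (by positivity)
    have h₃ : S / S' = 1 - c * (T ^ p / S') := by
      field_simp
      ring
    rw [h₃]
    gcongr
  have hexp : 0 ≤ -p⁻¹ + 1 := by linarith [inv_le_one_of_one_le₀ hp]
  calc a * (1 - c * (T * a / M) ^ p) ≤ M * S ^ (-p⁻¹) * (S / S') :=
        (mul_le_mul_of_nonneg_left hdecay ha).trans
          (mul_le_mul_of_nonneg_right haS (by positivity))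
    _ = M * S ^ (-p⁻¹ + 1) / S' := by rw [Real.rpow_add_one hS.ne']; ring
    _ ≤ M * S' ^ (-p⁻¹ + 1) / S' := by gcongr
    _ = M * S' ^ (-p⁻¹) := by rw [Real.rpow_add_one hS'.ne']; field_simp

theorem le_mul_rpow_of_le_mul_one_sub {a t : ℕ → ℝ} {M c p : ℝ} (hM : 0 < M) (hc : 0 ≤ c)
    (hp : 1 ≤ p) (ht : ∀ k, 0 < t k) (ht₁ : t 1 ≤ 1) (ha : ∀ k, 0 ≤ a k) (ha₁ : a 1 ≤ M)
    (hrec : ∀ k, 1 ≤ k → a (k + 1) ≤ a k * (1 - c * (t (k + 1) * a k / M) ^ p)) :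
    ∀ m, 1 ≤ m → a m ≤ M * (t 1 ^ p + c * ∑ k ∈ Finset.Icc 2 m, t k ^ p) ^ (-p⁻¹) := by
  intro m hm
  induction m, hm using Nat.le_induction with
  | base =>
    rw [Finset.Icc_eq_empty (by norm_num), Finset.sum_empty, mul_zero, add_zero,
      ← Real.rpow_mul (ht 1).le, mul_neg, mul_inv_cancel₀ (by positivity), Real.rpow_neg_one]
    exact ha₁.trans (le_mul_of_one_le_right hM.le ((one_le_inv₀ (ht 1)).mpr ht₁))
  | succ k hk ih =>
    have hS : 0 < t 1 ^ p + c * ∑ k ∈ Finset.Icc 2 k, t k ^ p :=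
      add_pos_of_pos_of_nonneg (Real.rpow_pos_of_pos (ht 1) p)
        (mul_nonneg hc (Finset.sum_nonneg fun i _ => (Real.rpow_pos_of_pos (ht i) p).le))
    rw [Finset.sum_Icc_succ_top (by omega), mul_add, ← add_assoc]
    exact (hrec k hk).trans
      (mul_one_sub_le_mul_rpow_add hM hS hc (ht _).le hp (ha k) ih)

theorem wrpga_banach_explicit_bound_general {X : Type*} [NormedAddCommGroup X] [NormedSpace ℝ X]
    (γ q : ℝ) (hq1 : 1 < q) (hγ : 0 < γ)
    (hρ : ∀ u : ℝ, 0 < u → modulusOfSmoothness X u ≤ γ * u ^ q)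
    (D : Set X) (hD : IsDictionary X D)
    (t : ℕ → ℝ) (ht : ∀ k : ℕ, t k ∈ Set.Ioc (0 : ℝ) 1)
    (M : ℝ) (hM : 0 < M) (f : X) (hf : f ∈ A1 X D M)
    (fseq : ℕ → X)
    (hstep : ∀ m : ℕ,
      (fseq m = f → fseq (m + 1) = f) ∧
      (fseq m ≠ f → ∃ (F : X →L[ℝ] ℝ) (φ : X) (lam s : ℝ),
        ‖F‖ = 1 ∧ F (f - fseq m) = ‖f - fseq m‖ ∧
        φ ∈ D ∧ |F φ| ≥ t (m + 1) * sSup {x : ℝ | ∃ ψ ∈ D, x = |F ψ|} ∧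
        lam = Real.sign (F φ) * ‖f - fseq m‖ * (2 * γ * q) ^ ((1 : ℝ) / (1 - q)) *
          |F φ| ^ ((1 : ℝ) / (q - 1)) ∧
        (∀ s' : ℝ, ‖f - s • (fseq m + lam • φ)‖ ≤ ‖f - s' • (fseq m + lam • φ)‖) ∧
        fseq (m + 1) = s • (fseq m + lam • φ))) :
    ∀ m : ℕ, 2 ≤ m →
      ‖f - fseq m‖ ≤
        M * (t 1 ^ (q / (q - 1)) +
          (q - 1) / q * (2 * γ * q) ^ ((1 : ℝ) / (1 - q)) *
            ∑ k ∈ Finset.Icc 2 m, t k ^ (q / (q - 1))) ^ ((1 : ℝ) / q - 1) := by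
  set c := (q - 1) / q * (2 * γ * q) ^ ((1 : ℝ) / (1 - q))
  set p := q / (q - 1) with hp
  have hstep' : ∀ m, fseq m ≠ f → IsWRPGAStep γ q D (t (m + 1)) f (fseq m) (fseq (m + 1)) :=
    fun m => (hstep m).2
  have hrec : ∀ k, 1 ≤ k →
      ‖f - fseq (k + 1)‖ ≤ ‖f - fseq k‖ * (1 - c * (t (k + 1) * ‖f - fseq k‖ / M) ^ p) := by
    intro k hk
    by_cases hfk : fseq k = f
    · simp [hfk, (hstep k).1 hfk]
    obtain ⟨j, rfl⟩ := Nat.exists_eq_add_of_le' hk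
    have hfj : fseq j ≠ f := fun h => hfk ((hstep j).1 h)
    exact (hstep' _ hfk).norm_sub_le hγ hq1 hρ hD.1 hM hf (ht _).1
      fun F hF hFr => (hstep' j hfj).apply_eq_zero hq1 hρ hfk hF.le hFr
  have h₁ : ‖f - fseq 1‖ ≤ M := by
    by_cases hf₀ : fseq 0 = f
    · simpa [(hstep 0).1 hf₀] using hM.le
    exact (hstep' 0 hf₀).norm_sub_le_norm.trans
      (norm_le_of_mem_A1 (fun φ hφ => (hD.1 φ hφ).le) hf)
  have hexp : (1 : ℝ) / q - 1 = -p⁻¹ := by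
    rw [hp]
    field_simp
    ring
  intro m hm
  rw [hexp]
  exact le_mul_rpow_of_le_mul_one_sub (a := fun k => ‖f - fseq k‖) hM (by positivity)
    ((one_le_div (by linarith)).mpr (by linarith)) (fun k => (ht k).1) (ht 1).2
    (fun k => norm_nonneg _) h₁ hrec m (by omega)

/-- Explicit error bound of the Weak Rescaled Pure Greedy Algorithm WRPGA({t_k}, D) in a
Banach space with `ρ(u) ≤ γ u^q`, `1 < q ≤ 2`: for `f ∈ A₁(D, M)` the iterates satisfy, for
`m ≥ 2`,
`‖f − f_m‖ ≤ M (t₁^{q/(q−1)} + ((q−1)/q)(2γq)^{1/(1−q)} ∑_{k=2}^m t_k^{q/(q−1)})^{1/q − 1}`. -/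
theorem wrpga_banach_explicit_bound {X : Type*} [NormedAddCommGroup X] [NormedSpace ℝ X]
    [CompleteSpace X]
    (γ q : ℝ) (hq1 : 1 < q) (hq2 : q ≤ 2) (hγ : 0 < γ)
    (hρ : ∀ u : ℝ, 0 < u → modulusOfSmoothness X u ≤ γ * u ^ q)
    (D : Set X) (hD : IsDictionary X D)
    (t : ℕ → ℝ) (ht : ∀ k : ℕ, t k ∈ Set.Ioc (0 : ℝ) 1)
    (M : ℝ) (hM : 0 < M) (f : X) (hf : f ∈ A1 X D M)
    (fseq : ℕ → X) (h0 : fseq 0 = 0)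
    (hstep : ∀ m : ℕ,
      (fseq m = f → fseq (m + 1) = f) ∧
      (fseq m ≠ f → ∃ (F : X →L[ℝ] ℝ) (φ : X) (lam s : ℝ),
        ‖F‖ = 1 ∧ F (f - fseq m) = ‖f - fseq m‖ ∧
        φ ∈ D ∧ |F φ| ≥ t (m + 1) * sSup {x : ℝ | ∃ ψ ∈ D, x = |F ψ|} ∧
        lam = Real.sign (F φ) * ‖f - fseq m‖ * (2 * γ * q) ^ ((1 : ℝ) / (1 - q)) *
          |F φ| ^ ((1 : ℝ) / (q - 1)) ∧
        (∀ s' : ℝ, ‖f - s • (fseq m + lam • φ)‖ ≤ ‖f - s' • (fseq m + lam • φ)‖) ∧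
        fseq (m + 1) = s • (fseq m + lam • φ))) :
    ∀ m : ℕ, 2 ≤ m →
      ‖f - fseq m‖ ≤
        M * (t 1 ^ (q / (q - 1)) +
          (q - 1) / q * (2 * γ * q) ^ ((1 : ℝ) / (1 - q)) *
            ∑ k ∈ Finset.Icc 2 m, t k ^ (q / (q - 1))) ^ ((1 : ℝ) / q - 1) :=
  wrpga_banach_explicit_bound_general γ q hq1 hγ hρ D hD t ht M hM f hf fseq hstep
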